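/- Let φ be the endomorphism of the free group F_2 with basis a, b defined by φ(a) = a b a^{-1} and φ(b) = a^{-1}. Then φ is injective, fix(φ) = ⟨a b a^{-1} b^{-1}⟩ (infinite cyclic), and φ has no attracting fixed words, i.e., a(φ) = 0. -/

import Mathlib

open Filter

namespace ZZFix

/-- A letter: a basis element together with a sign. -/
abbrev Letter (α : Type*) := α × Bool

/-- The inverse letter. -/
def linv {α : Type*} (l : Letter α) : Letter α := (l.1, !l.2)

/-- An infinite reduced word: a sequence of letters with no adjacent cancellation. -/
def InfWord (α : Type*) : Type _ := {w : ℕ → Letter α // ∀ i, w (i + 1) ≠ linv (w i)}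

/-- The length-`i` prefix of an infinite reduced word, as a list of letters. -/
def prefixList {α : Type*} (W : InfWord α) (i : ℕ) : List (Letter α) :=
  (List.range i).map W.1

/-- The length-`i` prefix of an infinite reduced word, as an element of the free group. -/
def wordPrefix {α : Type*} (W : InfWord α) (i : ℕ) : FreeGroup α :=
  FreeGroup.mk (prefixList W i)

/-- Length of the longest common prefix of two lists. -/
def commonPrefixLength {β : Type*} [DecidableEq β] : List β → List β → ℕ
  | a :: as, b :: bs => if a = b then commonPrefixLength as bs + 1 else 0
  | _, _ => 0

variable {α : Type*} [DecidableEq α]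

/-- `|W ∧ g|` for an infinite reduced word `W` and a finite reduced word `g`. -/
def wedgeF (W : InfWord α) (g : FreeGroup α) : ℕ :=
  commonPrefixLength (prefixList W (FreeGroup.toWord g).length) (FreeGroup.toWord g)

/-- `|g ∧ h|` for finite reduced words. -/
def wedgeFF (g h : FreeGroup α) : ℕ :=
  commonPrefixLength (FreeGroup.toWord g) (FreeGroup.toWord h)

/-- `|W ∧ V|` for infinite reduced words, valued in `ℕ∞` (it is `⊤` iff `W = V`). -/
noncomputable def wedgeI {α : Type*} (W V : InfWord α) : ℕ∞ :=
  sSup ((fun i : ℕ => (i : ℕ∞)) '' {i : ℕ | prefixList W i = prefixList V i})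

/-- A sequence of group elements converges to the infinite reduced word `W`
(in the initial segment metric on `F ⊔ ∂F`). -/
def ConvergesTo (u : ℕ → FreeGroup α) (W : InfWord α) : Prop :=
  Tendsto (fun i => wedgeF W (u i)) atTop atTop

/-- `W` is a fixed infinite word of `φ`: `|W ∧ φ(W_i)| → ∞`. -/
def IsFixedInfWord (φ : FreeGroup α →* FreeGroup α) (W : InfWord α) : Prop :=
  Tendsto (fun i => wedgeF W (φ (wordPrefix W i))) atTop atTop

/-- `W` is an attracting fixed word of `φ`: it is fixed and `|W ∧ φ(W_i)| - i → +∞`. -/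
def IsAttractingFixedWord (φ : FreeGroup α →* FreeGroup α) (W : InfWord α) : Prop :=
  IsFixedInfWord φ W ∧
    Tendsto (fun i => (wedgeF W (φ (wordPrefix W i)) : ℤ) - (i : ℤ)) atTop atTop

/-- The fixed subgroup of an endomorphism. -/
def fixedSubgroup {G : Type*} [Group G] (φ : G →* G) : Subgroup G where
  carrier := {g | φ g = g}
  one_mem' := map_one φ
  mul_mem' := by
    intro a b ha hb
    simp only [Set.mem_setOf_eq] at *
    rw [map_mul, ha, hb]
  inv_mem' := by
    intro a ha
    simp only [Set.mem_setOf_eq] at *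
    rw [map_inv, ha]

/-- The rank (minimal number of generators) of a subgroup, valued in `ℕ∞`. -/
noncomputable def grpRank {G : Type*} [Group G] (H : Subgroup G) : ℕ∞ :=
  sInf {k : ℕ∞ | ∃ S : Finset G, Subgroup.closure (S : Set G) = H ∧ (S.card : ℕ∞) = k}

/-- Two infinite reduced words are equivalent (w.r.t. `φ`) if `W' = U·W` for some
`U ∈ fix(φ)`, i.e. the reduced products `U·W_i` converge to `W'`. -/
def EquivFixedWords (φ : FreeGroup α →* FreeGroup α) (W W' : InfWord α) : Prop :=
  ∃ U ∈ fixedSubgroup φ, ConvergesTo (fun i => U * wordPrefix W i) W'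

/-- `a(φ)`: the number of equivalence classes of attracting fixed words, in `ℕ∞`. -/
noncomputable def aCard (φ : FreeGroup α →* FreeGroup α) : ℕ∞ :=
  ENat.card (Quot fun (W W' : {W : InfWord α // IsAttractingFixedWord φ W}) =>
    EquivFixedWords φ W.1 W'.1)

/-- The inner automorphism `i_c : g ↦ c g c⁻¹`, as a monoid homomorphism. -/
def innerAut {G : Type*} [Group G] (c : G) : G →* G := (MulAut.conj c).toMonoidHom

/-- Two endomorphisms are similar if `ψ₂ = i_c ∘ ψ₁ ∘ i_c⁻¹` for some `c`. -/
def Similar {G : Type*} [Group G] (ψ₁ ψ₂ : G →* G) : Prop :=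
  ∃ c : G, ψ₂ = ((innerAut c).comp ψ₁).comp (innerAut c⁻¹)

/-- The trace of the endomorphism of `ℤⁿ` induced by `φ` on the abelianization. -/
def abTrace {n : ℕ} (φ : FreeGroup (Fin n) →* FreeGroup (Fin n)) : ℤ :=
  ∑ i : Fin n, Multiplicative.toAdd
    ((FreeGroup.lift fun k => Multiplicative.ofAdd (if k = i then (1 : ℤ) else 0))
      (φ (FreeGroup.of i)))

/-- The constant infinite reduced word `l l l ⋯`. -/
def constWord {α : Type*} (l : Letter α) : InfWord α :=
  ⟨fun _ => l, fun _ h => by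
    have h2 := congrArg Prod.snd h
    simp [linv] at h2⟩

/-- `W` is an attracting fixed point of `φ`: it is fixed, and there is `i₀` such that
every finite or infinite reduced word `V` with `|W ∧ V| ≥ i₀` satisfies
`|W ∧ φᵖ(V)| → ∞` as `p → ∞`. -/
def IsAttractingFixedPoint (φ : FreeGroup α →* FreeGroup α) (W : InfWord α) : Prop :=
  IsFixedInfWord φ W ∧
    ∃ i₀ : ℕ,
      (∀ g : FreeGroup α, i₀ ≤ wedgeF W g →
        Tendsto (fun p => wedgeF W ((⇑φ)^[p] g)) atTop atTop) ∧
      (∀ V : InfWord α, (i₀ : ℕ∞) ≤ wedgeI W V →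
        ∀ Vs : ℕ → InfWord α, Vs 0 = V →
          (∀ p, ConvergesTo (fun i => φ (wordPrefix (Vs p) i)) (Vs (p + 1))) →
          Tendsto (fun p => wedgeI W (Vs p)) atTop atTop)

open scoped Classical in
/-- The initial segment metric. -/
noncomputable def distIS {α : Type*} (W V : InfWord α) : ℝ :=
  if W = V then 0 else 1 / (1 + ((wedgeI W V).toNat : ℝ))


/-!
The map `φ` fixes `c = ⁅a, b⁆`, and `φ⁴` is conjugation by `c`. Hence every fixed element commutes
with `c`; two commuting elements of a free group generate a free abelian, hence cyclic, subgroup,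
and `c` is not a proper power (as its image in the integer Heisenberg group shows), so
`fix(φ) = ⟨c⟩`.

Writing `φ = i_a ∘ ρ` with `ρ(a) = b`, `ρ(b) = a⁻¹` letter-to-letter gives `|φ(g)| ≤ |g| + 2`,
so `|W ∧ φ(W_i)| - i ≤ 2` for every infinite word `W`: no fixed word is attracting.
-/

lemma commonPrefixLength_le_length_right {β : Type*} [DecidableEq β] :
    ∀ l m : List β, commonPrefixLength l m ≤ m.length
  | a :: as, b :: bs => by
    rw [commonPrefixLength]
    split
    · simpa using commonPrefixLength_le_length_right as bs
    · simp
  | [], m => by cases m <;> simp [commonPrefixLength]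
  | _ :: _, [] => by simp [commonPrefixLength]

lemma wedgeF_le_norm (W : InfWord α) (g : FreeGroup α) : wedgeF W g ≤ g.norm :=
  commonPrefixLength_le_length_right _ _

lemma isReduced_prefixList {β : Type*} (W : InfWord β) (i : ℕ) :
    FreeGroup.IsReduced (prefixList W i) := by
  rw [FreeGroup.IsReduced, prefixList, List.isChain_map, List.isChain_range]
  intro m _ hfst
  by_contra hsnd
  exact W.2 m (Prod.ext hfst.symm (Bool.eq_not.mpr (Ne.symm hsnd)))

lemma norm_wordPrefix (W : InfWord α) (i : ℕ) : (wordPrefix W i).norm = i := by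
  rw [FreeGroup.norm, wordPrefix, FreeGroup.toWord_mk, (isReduced_prefixList W i).reduce_eq,
    prefixList, List.length_map, List.length_range]

theorem not_isAttractingFixedWord_of_norm_le_add (φ : FreeGroup α →* FreeGroup α) (C : ℕ)
    (hφ : ∀ g, (φ g).norm ≤ g.norm + C) (W : InfWord α) : ¬ IsAttractingFixedWord φ W := by
  rintro ⟨-, hW⟩
  obtain ⟨i, hi⟩ := (hW.eventually_ge_atTop (C + 1 : ℤ)).exists
  have := (wedgeF_le_norm W _).trans (hφ (wordPrefix W i))
  rw [norm_wordPrefix] at this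
  omega

theorem aCard_eq_zero_of_forall_not_isAttractingFixedWord (φ : FreeGroup α →* FreeGroup α)
    (h : ∀ W, ¬ IsAttractingFixedWord φ W) : aCard φ = 0 := by
  have : IsEmpty {W // IsAttractingFixedWord φ W} := ⟨fun W => h W.1 W.2⟩
  rw [aCard, ENat.card_eq_zero_iff_empty]
  infer_instance

section FreeGroupNorm

open FreeGroup

variable {β γ : Type*} [DecidableEq β]

lemma norm_list_prod_le {l : List (FreeGroup β)} {K : ℕ} (hl : ∀ x ∈ l, x.norm ≤ K) :
    l.prod.norm ≤ K * l.length := by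
  induction l with
  | nil => simp
  | cons x l ih =>
    simp only [List.forall_mem_cons] at hl
    calc (x * l.prod).norm ≤ x.norm + l.prod.norm := FreeGroup.norm_mul_le _ _
      _ ≤ K + K * l.length := add_le_add hl.1 (ih hl.2)
      _ = K * (x :: l).length := by simp [mul_add, add_comm]

lemma norm_lift_le [DecidableEq γ] (f : γ → FreeGroup β) {K : ℕ} (hf : ∀ x, (f x).norm ≤ K)
    (g : FreeGroup γ) : (lift f g).norm ≤ K * g.norm := by
  rw [← mk_toWord (x := g), lift_mk]
  refine (norm_list_prod_le ?_).trans_eq (by rw [List.length_map, mk_toWord]; rfl)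
  simp only [List.mem_map]
  rintro _ ⟨⟨x, _ | _⟩, -, rfl⟩ <;> simp [norm_inv_eq, hf]

lemma norm_conj_le (x y : FreeGroup β) : (x * y * x⁻¹).norm ≤ y.norm + 2 * x.norm := by
  have := FreeGroup.norm_mul_le (x * y) x⁻¹
  have := FreeGroup.norm_mul_le x y
  rw [norm_inv_eq] at *
  omega

end FreeGroupNorm

/-- The integer Heisenberg group: `⟨x, y, t⟩` is the matrix `[[1, x, t], [0, 1, y], [0, 0, 1]]`. -/
@[ext] structure Heisenberg where
  x : ℤ
  y : ℤ
  t : ℤ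

namespace Heisenberg

instance : Mul Heisenberg := ⟨fun u v => ⟨u.x + v.x, u.y + v.y, u.t + v.t + u.x * v.y⟩⟩
instance : One Heisenberg := ⟨⟨0, 0, 0⟩⟩
instance : Inv Heisenberg := ⟨fun u => ⟨-u.x, -u.y, u.x * u.y - u.t⟩⟩

@[simp] lemma mul_x (u v : Heisenberg) : (u * v).x = u.x + v.x := rfl
@[simp] lemma mul_y (u v : Heisenberg) : (u * v).y = u.y + v.y := rfl
@[simp] lemma mul_t (u v : Heisenberg) : (u * v).t = u.t + v.t + u.x * v.y := rfl
@[simp] lemma one_x : (1 : Heisenberg).x = 0 := rfl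
@[simp] lemma one_y : (1 : Heisenberg).y = 0 := rfl
@[simp] lemma one_t : (1 : Heisenberg).t = 0 := rfl
@[simp] lemma inv_x (u : Heisenberg) : u⁻¹.x = -u.x := rfl
@[simp] lemma inv_y (u : Heisenberg) : u⁻¹.y = -u.y := rfl
@[simp] lemma inv_t (u : Heisenberg) : u⁻¹.t = u.x * u.y - u.t := rfl

instance : Group Heisenberg where
  mul_assoc u v w := by ext <;> simp <;> ring
  one_mul u := by ext <;> simp
  mul_one u := by ext <;> simp
  inv_mul_cancel u := by ext <;> simp

lemma zpow_x (u : Heisenberg) (k : ℤ) : (u ^ k).x = k * u.x := by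
  induction k using Int.induction_on with
  | zero => simp
  | succ k ih => rw [zpow_add_one, mul_x, ih]; ring
  | pred k ih => rw [zpow_sub_one, mul_x, ih, inv_x]; ring

lemma zpow_t_of_x_eq_zero {u : Heisenberg} (hu : u.x = 0) (k : ℤ) : (u ^ k).t = k * u.t := by
  induction k using Int.induction_on with
  | zero => simp
  | succ k ih => rw [zpow_add_one, mul_t, ih, zpow_x, hu]; ring
  | pred k ih => rw [zpow_sub_one, mul_t, ih, zpow_x, inv_t, hu]; ring

end Heisenberg

open scoped commutatorElement in
/-- The commutator of two distinct generators maps to the generator `(0, 0, 1)` of the centre of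
the Heisenberg group, which is only a `k`-th power for `k = ±1`. -/
theorem eq_one_or_eq_neg_one_of_zpow_eq_commutator {β : Type*} [DecidableEq β] {a b : β}
    (hab : a ≠ b) {z : FreeGroup β} {k : ℤ}
    (hz : z ^ k = ⁅FreeGroup.of a, FreeGroup.of b⁆) : k = 1 ∨ k = -1 := by
  let f : FreeGroup β →* Heisenberg :=
    FreeGroup.lift fun i => if i = a then ⟨1, 0, 0⟩ else if i = b then ⟨0, 1, 0⟩ else 1
  have hfz : f z ^ k = ⟨0, 0, 1⟩ := by
    rw [← map_zpow, hz, commutatorElement_def]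
    ext <;> simp [f, hab.symm]
  have hk : k ≠ 0 := by
    rintro rfl
    simpa using congrArg Heisenberg.t hfz
  have hx : (f z).x = 0 := by
    simpa [Heisenberg.zpow_x, hk] using congrArg Heisenberg.x hfz
  have ht := congrArg Heisenberg.t hfz
  rw [Heisenberg.zpow_t_of_x_eq_zero hx] at ht
  exact Int.eq_one_or_neg_one_of_mul_eq_one ht

lemma isCyclic_freeGroup_of_subsingleton {ι : Type*} [Subsingleton ι] :
    IsCyclic (FreeGroup ι) := by
  rcases isEmpty_or_nonempty ι with hι | hι
  · infer_instance
  · obtain ⟨i⟩ := id hι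
    refine isCyclic_iff_exists_zpowers_eq_top.mpr ⟨FreeGroup.of i, ?_⟩
    have hof : (FreeGroup.of : ι → FreeGroup ι) = fun _ => FreeGroup.of i :=
      funext fun j => congrArg _ (Subsingleton.elim j i)
    rw [← FreeGroup.closure_range_of, hof, Set.range_const, Subgroup.zpowers_eq_closure]

lemma isCyclic_of_isFreeGroup {G : Type*} [Group G] [IsFreeGroup G] [IsMulCommutative G] :
    IsCyclic G := by
  have : Subsingleton (IsFreeGroup.Generators G) := by
    refine ⟨fun a b => by_contra fun hab => ?_⟩
    classical
    let σ : Equiv.Perm (Fin 3) := Equiv.swap 0 1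
    let τ : Equiv.Perm (Fin 3) := Equiv.swap 1 2
    have hστ : σ * τ ≠ τ * σ := by decide
    have := congrArg (IsFreeGroup.lift fun i => if i = a then σ else τ)
      (mul_comm' (IsFreeGroup.of a) (IsFreeGroup.of b))
    simp [Ne.symm hab] at this
    exact hστ this
  have := isCyclic_freeGroup_of_subsingleton (ι := IsFreeGroup.Generators G)
  exact isCyclic_of_surjective (IsFreeGroup.toFreeGroup G).symm (MulEquiv.surjective _)

lemma centralizer_le_zpowers_of_not_proper_power {β : Type*} {c : FreeGroup β}
    (hc : ∀ (z : FreeGroup β) (k : ℤ), z ^ k = c → k = 1 ∨ k = -1) :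
    Subgroup.centralizer {c} ≤ Subgroup.zpowers c := by
  intro g hg
  let H := Subgroup.closure {g, c}
  have : IsMulCommutative H := Subgroup.isMulCommutative_closure (by
    rintro x (rfl | rfl) y (rfl | rfl) <;> simp [Subgroup.mem_centralizer_singleton_iff.mp hg])
  have : IsCyclic H := isCyclic_of_isFreeGroup
  obtain ⟨z, hz⟩ := IsCyclic.exists_generator (α := H)
  obtain ⟨k, hk⟩ := Subgroup.mem_zpowers_iff.mp (hz ⟨c, Subgroup.subset_closure (by simp)⟩)
  obtain ⟨m, hm⟩ := Subgroup.mem_zpowers_iff.mp (hz ⟨g, Subgroup.subset_closure (by simp)⟩)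
  have hzk : (z : FreeGroup β) ^ k = c := by simpa using congrArg Subtype.val hk
  have hzc : (z : FreeGroup β) ∈ Subgroup.zpowers c := by
    refine Subgroup.mem_zpowers_iff.mpr ⟨k, ?_⟩
    rw [← hzk, ← zpow_mul, (by rcases hc z k hzk with rfl | rfl <;> rfl : k * k = 1), zpow_one]
  have hzm : (z : FreeGroup β) ^ m = g := by simpa using congrArg Subtype.val hm
  exact hzm ▸ Subgroup.zpow_mem _ hzc m

lemma fixedSubgroup_le_centralizer_of_iterate_eq_conj {G : Type*} [Group G] (φ : G →* G) {c : G}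
    (n : ℕ) (hφn : ∀ g, φ^[n] g = c * g * c⁻¹) : fixedSubgroup φ ≤ Subgroup.centralizer {c} := by
  intro g hg
  have hconj : c * g * c⁻¹ = g := (hφn g).symm.trans (Function.iterate_fixed hg n)
  rw [Subgroup.mem_centralizer_singleton_iff]
  exact (mul_inv_eq_iff_eq_mul.mp hconj).symm

/-- Example 6.3: for `φ(a) = a b a⁻¹`, `φ(b) = a⁻¹` on `F₂`,
`φ` is injective, `fix(φ) = ⟨a b a⁻¹ b⁻¹⟩`, and `φ` has no attracting fixed words,
so `a(φ) = 0`. -/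
theorem stmt16 (φ : FreeGroup (Fin 2) →* FreeGroup (Fin 2))
    (ha : φ (FreeGroup.of 0) =
      FreeGroup.of 0 * FreeGroup.of 1 * (FreeGroup.of 0)⁻¹)
    (hb : φ (FreeGroup.of 1) = (FreeGroup.of 0)⁻¹) :
    Function.Injective φ ∧
    fixedSubgroup φ = Subgroup.zpowers
      (FreeGroup.of 0 * FreeGroup.of 1 * (FreeGroup.of 0)⁻¹ * (FreeGroup.of 1)⁻¹) ∧
    (∀ W : InfWord (Fin 2), ¬ IsAttractingFixedWord φ W) ∧
    aCard φ = 0 := by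
  set c : FreeGroup (Fin 2) :=
    FreeGroup.of 0 * FreeGroup.of 1 * (FreeGroup.of 0)⁻¹ * (FreeGroup.of 1)⁻¹
  let ψ : FreeGroup (Fin 2) →* FreeGroup (Fin 2) :=
    FreeGroup.lift ![(FreeGroup.of 1)⁻¹, FreeGroup.of 1 * FreeGroup.of 0 * (FreeGroup.of 1)⁻¹]
  let ρ : FreeGroup (Fin 2) →* FreeGroup (Fin 2) :=
    FreeGroup.lift ![FreeGroup.of 1, (FreeGroup.of 0)⁻¹]
  have hψφ : ψ.comp φ = MonoidHom.id _ :=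
    FreeGroup.ext_hom _ _ fun i => by fin_cases i <;> simp [ψ, ha, hb]; group
  have hφc : φ c = c := by simp [c, ha, hb]; group
  have hφ4 : (φ.comp φ).comp (φ.comp φ) = (MulAut.conj c).toMonoidHom :=
    FreeGroup.ext_hom _ _ fun i => by fin_cases i <;> simp [c, ha, hb] <;> group
  have hφρ : φ = (MulAut.conj (FreeGroup.of 0)).toMonoidHom.comp ρ :=
    FreeGroup.ext_hom _ _ fun i => by fin_cases i <;> simp [ρ, ha, hb]
  have hρ : ∀ g, (ρ g).norm ≤ g.norm := by
    simpa using norm_lift_le _ (K := 1) (by simp [Fin.forall_fin_two, FreeGroup.norm_inv_eq])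
  have hnot : ∀ W, ¬ IsAttractingFixedWord φ W := not_isAttractingFixedWord_of_norm_le_add φ 2
    fun g => by
      rw [hφρ]
      refine (norm_conj_le _ _).trans ?_
      rw [FreeGroup.norm_of]
      linarith [hρ g]
  refine ⟨Function.LeftInverse.injective (DFunLike.congr_fun hψφ), le_antisymm ?_ ?_, hnot,
    aCard_eq_zero_of_forall_not_isAttractingFixedWord φ hnot⟩
  · refine (fixedSubgroup_le_centralizer_of_iterate_eq_conj φ 4 (DFunLike.congr_fun hφ4)).trans
      (centralizer_le_zpowers_of_not_proper_power fun z k hz => ?_)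
    exact eq_one_or_eq_neg_one_of_zpow_eq_commutator (by decide) hz
  · exact Subgroup.zpowers_le.mpr hφc

end ZZFix
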